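/- arXiv:1604.02596 — 4 statements merged into one kernel-verified Lean document; each statement's English description precedes it below -/
import Mathlib

section
/- Let V ∈ C²(ℝ^n) and c > 0. Suppose (x,v) : I → ℝ^n × ℝ^n is smooth and satisfies ẋ = v/c and v̇ = -v/c² + ∇V(x)/c. Define H(x,v) = |v|²/2 + V(x). Then (d²/dt²)H(x(t),v(t)) = 2|v̇(t)|² + 2 Hess V(x(t))(ẋ(t), ẋ(t)). In particular, if Hess V ≥ K·Id, then (d²/dt²)H ≥ 2K|ẋ|² + 2c²|ẍ|². -/
open Real RealInnerProductSpace

/-- Along the Langevin deformation `ẋ = v/c`, `v̇ = -v/c² + ∇V(x)/c` on `ℝ^n`,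
the Hamiltonian `H = |v|²/2 + V(x)` satisfies
`H'' = 2|v̇|² + 2 Hess V(ẋ, ẋ)`; in particular if `Hess V ≥ K·Id` then
`H'' ≥ 2K|ẋ|² + 2c²|ẍ|²` (where `ẍ = (1/c)v̇`). -/
theorem langevin_hamiltonian_second_derivative (n : ℕ) (c K : ℝ) (hc : 0 < c)
    (V : EuclideanSpace ℝ (Fin n) → ℝ) (hV : ContDiff ℝ 2 V)
    (I : Set ℝ) (hI : IsOpen I)
    (x v : ℝ → EuclideanSpace ℝ (Fin n))
    (hx : ∀ t ∈ I, HasDerivAt x ((1 / c) • v t) t)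
    (hv : ∀ t ∈ I, HasDerivAt v (-(1 / c ^ 2) • v t + (1 / c) • gradient V (x t)) t) :
    ∀ t ∈ I,
      deriv (deriv (fun s => ‖v s‖ ^ 2 / 2 + V (x s))) t =
        2 * ‖-(1 / c ^ 2) • v t + (1 / c) • gradient V (x t)‖ ^ 2 +
          2 * (inner ℝ ((fderiv ℝ (gradient V) (x t)) ((1 / c) • v t)) ((1 / c) • v t) : ℝ) ∧
      ((∀ p a, K * ‖a‖ ^ 2 ≤ (inner ℝ ((fderiv ℝ (gradient V) p) a) a : ℝ)) →
        2 * K * ‖(1 / c) • v t‖ ^ 2 +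
            2 * c ^ 2 * ‖(1 / c) • (-(1 / c ^ 2) • v t + (1 / c) • gradient V (x t))‖ ^ 2 ≤
          deriv (deriv (fun s => ‖v s‖ ^ 2 / 2 + V (x s))) t) := by
  -- gradient is C¹
  have hgradC : ContDiff ℝ 1 (gradient V) := by
    have h1 : ContDiff ℝ 1 (fderiv ℝ V) := hV.fderiv_right (by norm_num)
    have : gradient V = fun y =>
        (InnerProductSpace.toDual ℝ (EuclideanSpace ℝ (Fin n))).symm (fderiv ℝ V y) := rfl
    rw [this]
    exact ((InnerProductSpace.toDual ℝ _).symm.toLinearIsometry.contDiff).comp h1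
  have hVd : Differentiable ℝ V := hV.differentiable (by norm_num)
  set w : ℝ → EuclideanSpace ℝ (Fin n) :=
    fun s => -(1 / c ^ 2) • v s + (1 / c) • gradient V (x s) with hw_def
  -- derivative of gradient V ∘ x
  have hgx : ∀ s ∈ I, HasDerivAt (fun s => gradient V (x s))
      ((fderiv ℝ (gradient V) (x s)) ((1 / c) • v s)) s := fun s hs =>
    ((hgradC.differentiable one_ne_zero (x s)).hasFDerivAt).comp_hasDerivAt s (hx s hs)
  have hw : ∀ s ∈ I, HasDerivAt w
      (-(1 / c ^ 2) • w s + (1 / c) • (fderiv ℝ (gradient V) (x s)) ((1 / c) • v s)) s :=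
    fun s hs => ((hv s hs).const_smul (-(1 / c ^ 2))).add ((hgx s hs).const_smul (1 / c))
  -- first derivative of H
  set D : ℝ → ℝ := fun s => (⟪v s, w s⟫ + ⟪w s, v s⟫) / 2 + ⟪gradient V (x s), (1 / c) • v s⟫
    with hD_def
  have hH1 : ∀ s ∈ I, HasDerivAt (fun s => ‖v s‖ ^ 2 / 2 + V (x s)) (D s) s := by
    intro s hs
    have h1 : HasDerivAt (fun s => ⟪v s, v s⟫ / 2) ((⟪v s, w s⟫ + ⟪w s, v s⟫) / 2) s :=
      (HasDerivAt.inner ℝ (hv s hs) (hv s hs)).div_const 2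
    have h2 : HasDerivAt (fun s => V (x s)) (⟪gradient V (x s), (1 / c) • v s⟫) s := by
      have := ((hVd (x s)).hasGradientAt.hasFDerivAt).comp_hasDerivAt s (hx s hs)
      simp only [InnerProductSpace.toDual_apply_apply] at this; exact this
    have heq : (fun s => ‖v s‖ ^ 2 / 2 + V (x s)) = fun s => ⟪v s, v s⟫ / 2 + V (x s) := by
      funext s; rw [real_inner_self_eq_norm_sq]
    rw [heq]
    exact h1.add h2
  have hderivH : Set.EqOn (deriv (fun s => ‖v s‖ ^ 2 / 2 + V (x s))) D I :=
    fun s hs => (hH1 s hs).deriv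
  intro t ht
  -- second derivative
  have hD' : HasDerivAt D
      ((((⟪v t, -(1 / c ^ 2) • w t + (1 / c) • (fderiv ℝ (gradient V) (x t)) ((1 / c) • v t)⟫
          + ⟪w t, w t⟫)) +
        ((⟪w t, w t⟫ +
          ⟪-(1 / c ^ 2) • w t + (1 / c) • (fderiv ℝ (gradient V) (x t)) ((1 / c) • v t), v t⟫))) / 2 +
       (⟪gradient V (x t), (1 / c) • w t⟫
          + ⟪(fderiv ℝ (gradient V) (x t)) ((1 / c) • v t), (1 / c) • v t⟫)) t := by
    have h1 := HasDerivAt.inner ℝ (hv t ht) (hw t ht)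
    have h1' := HasDerivAt.inner ℝ (hw t ht) (hv t ht)
    have h2 := HasDerivAt.inner ℝ (hgx t ht) ((hv t ht).const_smul (1 / c : ℝ))
    exact ((h1.add h1').div_const 2).add h2
  have key : deriv (deriv (fun s => ‖v s‖ ^ 2 / 2 + V (x s))) t = deriv D t := by
    apply Filter.EventuallyEq.deriv_eq
    exact Filter.eventuallyEq_of_mem (hI.mem_nhds ht) hderivH
  rw [key, hD'.deriv]
  set A := (fderiv ℝ (gradient V) (x t)) ((1 / c) • v t) with hA
  set g := gradient V (x t) with hg
  have hwt : w t = -(1 / c ^ 2) • v t + (1 / c) • g := rfl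
  have hexp : ((⟪v t, -(1 / c ^ 2) • w t + (1 / c) • A⟫ + ⟪w t, w t⟫) +
        (⟪w t, w t⟫ + ⟪-(1 / c ^ 2) • w t + (1 / c) • A, v t⟫)) / 2 +
       (⟪g, (1 / c) • w t⟫ + ⟪A, (1 / c) • v t⟫) =
      2 * ‖w t‖ ^ 2 + 2 * ⟪A, (1 / c) • v t⟫ := by
    rw [← real_inner_self_eq_norm_sq, hwt]
    simp only [inner_add_left, inner_add_right, real_inner_smul_left, real_inner_smul_right,
      inner_neg_left, inner_neg_right]
    rw [real_inner_comm (v t) A, real_inner_comm (v t) g, real_inner_comm A (v t), real_inner_comm g (v t)]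
    ring
  rw [hexp]
  constructor
  · rfl
  · intro hHess
    have h1 := hHess (x t) ((1 / c) • v t)
    have h2 : ‖(1 / c) • w t‖ ^ 2 = (1 / c) ^ 2 * ‖w t‖ ^ 2 := by
      rw [norm_smul, Real.norm_eq_abs, abs_of_pos (by positivity : (0:ℝ) < 1 / c), mul_pow]
    rw [hwt] at h2 ⊢
    rw [h2]
    have hc2 : c ^ 2 * (1 / c) ^ 2 = 1 := by field_simp
    nlinarith [h1]
end

section
/- Let V ∈ C²(ℝ^n), c > 0, and suppose (x,v) : I → ℝ^n × ℝ^n satisfies ẋ = v/c and v̇ = -v/c² + ∇V(x)/c. Then (d²/dt² + (1/c²)·d/dt)V(x(t)) = (1/c²)[Hess V(x(t))(v(t),v(t)) + |∇V(x(t))|²] and, with H(x,v) = |v|²/2 + V(x), (d²/dt² + (2/c²)·d/dt)H(x(t),v(t)) = (2/c²)[Hess V(x(t))(v(t),v(t)) + |∇V(x(t))|²]. -/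
open Real RealInnerProductSpace

/-- Along the Langevin deformation `ẋ = v/c`, `v̇ = -v/c² + ∇V(x)/c` on `ℝ^n`:
`(d²/dt² + (1/c²) d/dt) V(x(t)) = (1/c²)(Hess V(v,v) + |∇V|²)` and, with
`H = |v|²/2 + V(x)`, `(d²/dt² + (2/c²) d/dt) H = (2/c²)(Hess V(v,v) + |∇V|²)`. -/
theorem langevin_potential_and_hamiltonian_identities (n : ℕ) (c : ℝ) (hc : 0 < c)
    (V : EuclideanSpace ℝ (Fin n) → ℝ) (hV : ContDiff ℝ 2 V)
    (I : Set ℝ) (hI : IsOpen I)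
    (x v : ℝ → EuclideanSpace ℝ (Fin n))
    (hx : ∀ t ∈ I, HasDerivAt x ((1 / c) • v t) t)
    (hv : ∀ t ∈ I, HasDerivAt v (-(1 / c ^ 2) • v t + (1 / c) • gradient V (x t)) t) :
    ∀ t ∈ I,
      deriv (deriv (fun s => V (x s))) t + (1 / c ^ 2) * deriv (fun s => V (x s)) t =
        (1 / c ^ 2) * ((inner ℝ ((fderiv ℝ (gradient V) (x t)) (v t)) (v t) : ℝ) +
          ‖gradient V (x t)‖ ^ 2) ∧
      deriv (deriv (fun s => ‖v s‖ ^ 2 / 2 + V (x s))) t +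
          (2 / c ^ 2) * deriv (fun s => ‖v s‖ ^ 2 / 2 + V (x s)) t =
        (2 / c ^ 2) * ((inner ℝ ((fderiv ℝ (gradient V) (x t)) (v t)) (v t) : ℝ) +
          ‖gradient V (x t)‖ ^ 2) := by
  have hV1 : Differentiable ℝ V := hV.differentiable (by norm_num)
  have hgradCD : ContDiff ℝ 1 (gradient V) := by
    have h1 : ContDiff ℝ 1 (fderiv ℝ V) := hV.fderiv_right (by norm_num)
    exact ((InnerProductSpace.toDual ℝ _).symm.toContinuousLinearEquiv.contDiff).comp h1
  -- derivative of V ∘ x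
  have key : ∀ t ∈ I, HasDerivAt (fun s => V (x s))
      ((1 / c) * (inner ℝ (gradient V (x t)) (v t) : ℝ)) t := by
    intro t ht
    have h := ((hV1 (x t)).hasGradientAt.hasFDerivAt).comp_hasDerivAt t (hx t ht)
    refine h.congr_deriv ?_
    simp [InnerProductSpace.toDual_apply_apply, inner_smul_right]
  -- derivative of gradient V ∘ x
  have keyg : ∀ t ∈ I, HasDerivAt (fun s => gradient V (x s))
      ((1 / c) • (fderiv ℝ (gradient V) (x t)) (v t)) t := by
    intro t ht
    have hd : HasFDerivAt (gradient V) (fderiv ℝ (gradient V) (x t)) (x t) :=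
      (hgradCD.differentiable one_ne_zero (x t)).hasFDerivAt
    refine (hd.comp_hasDerivAt t (hx t ht)).congr_deriv ?_
    simp [map_smul]
  -- derivative of ⟪grad V (x s), v s⟫
  have keyG : ∀ t ∈ I, HasDerivAt (fun s => (inner ℝ (gradient V (x s)) (v s) : ℝ))
      ((inner ℝ (gradient V (x t)) (-(1 / c ^ 2) • v t + (1 / c) • gradient V (x t)) : ℝ) +
        (inner ℝ ((1 / c) • (fderiv ℝ (gradient V) (x t)) (v t)) (v t) : ℝ)) t := by
    intro t ht
    exact HasDerivAt.inner ℝ (keyg t ht) (hv t ht)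
  -- derivative of the Hamiltonian
  have keyH : ∀ t ∈ I, HasDerivAt (fun s => ‖v s‖ ^ 2 / 2 + V (x s))
      (((inner ℝ (v t) (-(1 / c ^ 2) • v t + (1 / c) • gradient V (x t)) : ℝ) +
        (inner ℝ (-(1 / c ^ 2) • v t + (1 / c) • gradient V (x t)) (v t) : ℝ)) / 2 +
        (1 / c) * (inner ℝ (gradient V (x t)) (v t) : ℝ)) t := by
    intro t ht
    have heq : (fun s => ‖v s‖ ^ 2 / 2 + V (x s)) =
        fun s => (inner ℝ (v s) (v s) : ℝ) / 2 + V (x s) := by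
      funext s; rw [real_inner_self_eq_norm_sq]
    rw [heq]
    exact ((HasDerivAt.inner ℝ (hv t ht) (hv t ht)).div_const 2).add (key t ht)
  intro t ht
  have hmem : I ∈ nhds t := hI.mem_nhds ht
  constructor
  · have d1 : deriv (fun s => V (x s)) =ᶠ[nhds t]
        fun s => (1 / c) * (inner ℝ (gradient V (x s)) (v s) : ℝ) :=
      Filter.eventually_of_mem hmem fun s hs => (key s hs).deriv
    have d2 : deriv (deriv (fun s => V (x s))) t =
        (1 / c) * ((inner ℝ (gradient V (x t)) (-(1 / c ^ 2) • v t + (1 / c) • gradient V (x t)) : ℝ) +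
          (inner ℝ ((1 / c) • (fderiv ℝ (gradient V) (x t)) (v t)) (v t) : ℝ)) := by
      rw [d1.deriv_eq]
      exact ((keyG t ht).const_mul (1 / c)).deriv
    rw [d2, (key t ht).deriv]
    simp only [inner_add_right, inner_smul_right, real_inner_smul_left,
      real_inner_self_eq_norm_sq]
    field_simp
    ring
  · -- second derivative of H
    have d1 : deriv (fun s => ‖v s‖ ^ 2 / 2 + V (x s)) =ᶠ[nhds t]
        fun s => ((inner ℝ (v s) (-(1 / c ^ 2) • v s + (1 / c) • gradient V (x s)) : ℝ) +
          (inner ℝ (-(1 / c ^ 2) • v s + (1 / c) • gradient V (x s)) (v s) : ℝ)) / 2 +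
          (1 / c) * (inner ℝ (gradient V (x s)) (v s) : ℝ) :=
      Filter.eventually_of_mem hmem fun s hs => (keyH s hs).deriv
    -- derivative of w = v' along the flow
    have keyw : HasDerivAt (fun s => -(1 / c ^ 2) • v s + (1 / c) • gradient V (x s))
        (-(1 / c ^ 2) • (-(1 / c ^ 2) • v t + (1 / c) • gradient V (x t)) +
          (1 / c) • ((1 / c) • (fderiv ℝ (gradient V) (x t)) (v t))) t :=
      ((hv t ht).const_smul (-(1 / c ^ 2))).add ((keyg t ht).const_smul (1 / c))
    have hD : HasDerivAt (fun s => ((inner ℝ (v s) (-(1 / c ^ 2) • v s + (1 / c) • gradient V (x s)) : ℝ) +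
          (inner ℝ (-(1 / c ^ 2) • v s + (1 / c) • gradient V (x s)) (v s) : ℝ)) / 2 +
          (1 / c) * (inner ℝ (gradient V (x s)) (v s) : ℝ))
        ((((inner ℝ (v t) (-(1 / c ^ 2) • (-(1 / c ^ 2) • v t + (1 / c) • gradient V (x t)) +
              (1 / c) • ((1 / c) • (fderiv ℝ (gradient V) (x t)) (v t))) : ℝ) +
            (inner ℝ (-(1 / c ^ 2) • v t + (1 / c) • gradient V (x t))
              (-(1 / c ^ 2) • v t + (1 / c) • gradient V (x t)) : ℝ)) +
          ((inner ℝ (-(1 / c ^ 2) • v t + (1 / c) • gradient V (x t))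
              (-(1 / c ^ 2) • v t + (1 / c) • gradient V (x t)) : ℝ) +
            (inner ℝ (-(1 / c ^ 2) • (-(1 / c ^ 2) • v t + (1 / c) • gradient V (x t)) +
              (1 / c) • ((1 / c) • (fderiv ℝ (gradient V) (x t)) (v t))) (v t) : ℝ))) / 2 +
          (1 / c) * ((inner ℝ (gradient V (x t)) (-(1 / c ^ 2) • v t + (1 / c) • gradient V (x t)) : ℝ) +
            (inner ℝ ((1 / c) • (fderiv ℝ (gradient V) (x t)) (v t)) (v t) : ℝ))) t := by
      exact (((HasDerivAt.inner ℝ (hv t ht) keyw).add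
        (HasDerivAt.inner ℝ keyw (hv t ht))).div_const 2).add
        ((keyG t ht).const_mul (1 / c))
    have d2 := d1.deriv_eq.trans hD.deriv
    rw [d2, (keyH t ht).deriv]
    simp only [inner_add_right, inner_add_left, inner_smul_right, real_inner_smul_left,
      inner_neg_left, inner_neg_right, real_inner_self_eq_norm_sq]
    rw [real_inner_comm (v t) (gradient V (x t)),
      real_inner_comm (v t) ((fderiv ℝ (gradient V) (x t)) (v t))]
    field_simp
    ring
end

section
/- Let x : I → ℝ^n satisfy the Newton–Langevin equation c²ẍ = -ẋ + ∇V(x) for V ∈ C²(ℝ^n) convex (Hess V ≥ 0) and c > 0. Define W(t) = H(x(t),v(t)) + (c²/2)(1 - e^{2t/c²})(d/dt)H(x(t),v(t)), where v = cẋ and H(x,v) = |v|²/2 + V(x). Then W'(t) = (1 - e^{2t/c²})[Hess V(x)(v,v) + |∇V(x)|²] ≤ 0 for all t ≥ 0. -/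
open Real RealInnerProductSpace

/-- W-entropy monotonicity along the Newton–Langevin flow: for convex `V` and
`W(t) = H(t) + (c²/2)(1 - e^{2t/c²}) H'(t)` with `H = |v|²/2 + V(x)`,
`W'(t) = (1 - e^{2t/c²})(Hess V(v,v) + |∇V|²) ≤ 0` for all `t ≥ 0`. -/
theorem langevin_w_entropy_monotone (n : ℕ) (c : ℝ) (hc : 0 < c)
    (V : EuclideanSpace ℝ (Fin n) → ℝ) (hV : ContDiff ℝ 2 V)
    (hconv : ∀ p a, 0 ≤ (inner ℝ ((fderiv ℝ (gradient V) p) a) a : ℝ))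
    (x v : ℝ → EuclideanSpace ℝ (Fin n))
    (hx : ∀ t, HasDerivAt x ((1 / c) • v t) t)
    (hv : ∀ t, HasDerivAt v (-(1 / c ^ 2) • v t + (1 / c) • gradient V (x t)) t) :
    ∀ t : ℝ, 0 ≤ t →
      deriv (fun s => (‖v s‖ ^ 2 / 2 + V (x s)) +
          (c ^ 2 / 2) * (1 - Real.exp (2 * s / c ^ 2)) *
            deriv (fun r => ‖v r‖ ^ 2 / 2 + V (x r)) s) t =
        (1 - Real.exp (2 * t / c ^ 2)) *
          ((inner ℝ ((fderiv ℝ (gradient V) (x t)) (v t)) (v t) : ℝ) + ‖gradient V (x t)‖ ^ 2) ∧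
      deriv (fun s => (‖v s‖ ^ 2 / 2 + V (x s)) +
          (c ^ 2 / 2) * (1 - Real.exp (2 * s / c ^ 2)) *
            deriv (fun r => ‖v r‖ ^ 2 / 2 + V (x r)) s) t ≤ 0 := by
  have hcne : c ≠ 0 := ne_of_gt hc
  have hc2 : (c : ℝ) ^ 2 ≠ 0 := pow_ne_zero _ hcne
  set g := gradient V with hgdef
  have hVd : Differentiable ℝ V := hV.differentiable two_ne_zero
  have hfd : Differentiable ℝ (fderiv ℝ V) :=
    (hV.fderiv_right (m := 1) le_rfl).differentiable one_ne_zero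
  have hgd : Differentiable ℝ g := by
    have hge : g = fun p => (InnerProductSpace.toDual ℝ _).symm (fderiv ℝ V p) := rfl
    rw [hge]
    exact (InnerProductSpace.toDual ℝ _).symm.toContinuousLinearEquiv.differentiable.comp hfd
  -- derivative of V ∘ x
  have hVx : ∀ s, HasDerivAt (fun r => V (x r)) ((1 / c) * inner ℝ (g (x s)) (v s)) s := by
    intro s
    have h1 := ((hVd (x s)).hasGradientAt.hasFDerivAt).comp_hasDerivAt s (hx s)
    rw [map_smul, InnerProductSpace.toDual_apply_apply, smul_eq_mul] at h1
    exact h1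
  -- derivative of g ∘ x
  have hgx : ∀ s, HasDerivAt (fun r => g (x r))
      ((1 / c) • (fderiv ℝ g (x s)) (v s)) s := by
    intro s
    have h1 := ((hgd (x s)).hasFDerivAt).comp_hasDerivAt s (hx s)
    rw [map_smul] at h1
    exact h1
  -- H' = h1
  have key : ∀ s, HasDerivAt (fun r => ‖v r‖ ^ 2 / 2 + V (x r))
      (-(1 / c ^ 2) * inner ℝ (v s) (v s) + (2 / c) * inner ℝ (g (x s)) (v s)) s := by
    intro s
    have hvv : HasDerivAt (fun r => (inner ℝ (v r) (v r) : ℝ))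
        (inner ℝ (v s) (-(1 / c ^ 2) • v s + (1 / c) • g (x s)) +
          inner ℝ (-(1 / c ^ 2) • v s + (1 / c) • g (x s)) (v s)) s :=
      HasDerivAt.inner ℝ (hv s) (hv s)
    have h2 : HasDerivAt (fun r => ‖v r‖ ^ 2 / 2 + V (x r))
        ((inner ℝ (v s) (-(1 / c ^ 2) • v s + (1 / c) • g (x s)) +
          inner ℝ (-(1 / c ^ 2) • v s + (1 / c) • g (x s)) (v s)) / 2 +
          (1 / c) * inner ℝ (g (x s)) (v s)) s := by
      have := (hvv.div_const 2).add (hVx s)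
      simp only [real_inner_self_eq_norm_sq] at this
      exact this
    convert h2 using 1
    simp only [inner_add_left, inner_add_right, real_inner_smul_left, real_inner_smul_right,
      real_inner_comm (g (x s)) (v s)]
    ring
  have hderiv1 : (fun s => deriv (fun r => ‖v r‖ ^ 2 / 2 + V (x r)) s) =
      fun s => -(1 / c ^ 2) * inner ℝ (v s) (v s) + (2 / c) * inner ℝ (g (x s)) (v s) := by
    funext s; exact (key s).deriv
  intro t ht
  -- derivative of h1
  have hh1 : HasDerivAt (fun s => -(1 / c ^ 2) * (inner ℝ (v s) (v s) : ℝ) +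
      (2 / c) * inner ℝ (g (x s)) (v s))
      (-(1 / c ^ 2) * (inner ℝ (v t) (-(1 / c ^ 2) • v t + (1 / c) • g (x t)) +
          inner ℝ (-(1 / c ^ 2) • v t + (1 / c) • g (x t)) (v t)) +
        (2 / c) * (inner ℝ (g (x t)) (-(1 / c ^ 2) • v t + (1 / c) • g (x t)) +
          inner ℝ ((1 / c : ℝ) • (fderiv ℝ g (x t)) (v t)) (v t))) t := by
    have h1 : HasDerivAt (fun s => (inner ℝ (v s) (v s) : ℝ))
        (inner ℝ (v t) (-(1 / c ^ 2) • v t + (1 / c) • g (x t)) +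
          inner ℝ (-(1 / c ^ 2) • v t + (1 / c) • g (x t)) (v t)) t :=
      HasDerivAt.inner ℝ (hv t) (hv t)
    have h2 : HasDerivAt (fun s => (inner ℝ (g (x s)) (v s) : ℝ))
        (inner ℝ (g (x t)) (-(1 / c ^ 2) • v t + (1 / c) • g (x t)) +
          inner ℝ ((1 / c : ℝ) • (fderiv ℝ g (x t)) (v t)) (v t)) t :=
      HasDerivAt.inner ℝ (hgx t) (hv t)
    exact (h1.const_mul _).add (h2.const_mul _)
  -- derivative of the exponential factor
  have hexp : HasDerivAt (fun s => (1 : ℝ) - Real.exp (2 * s / c ^ 2))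
      (-(2 / c ^ 2 * Real.exp (2 * t / c ^ 2))) t := by
    have h1 : HasDerivAt (fun s : ℝ => 2 * s / c ^ 2) (2 / c ^ 2) t := by
      simpa [mul_comm, mul_div_assoc] using
        (hasDerivAt_id t).const_mul (2 / c ^ 2 : ℝ)
    have h2 := h1.exp
    simpa [mul_comm] using h2.const_sub (1 : ℝ)
  -- full derivative of W
  have hW : HasDerivAt (fun s => (‖v s‖ ^ 2 / 2 + V (x s)) +
      (c ^ 2 / 2) * (1 - Real.exp (2 * s / c ^ 2)) *
        (-(1 / c ^ 2) * inner ℝ (v s) (v s) + (2 / c) * inner ℝ (g (x s)) (v s)))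
      ((-(1 / c ^ 2) * inner ℝ (v t) (v t) + (2 / c) * inner ℝ (g (x t)) (v t)) +
        ((c ^ 2 / 2) * (-(2 / c ^ 2 * Real.exp (2 * t / c ^ 2))) *
          (-(1 / c ^ 2) * inner ℝ (v t) (v t) + (2 / c) * inner ℝ (g (x t)) (v t)) +
        (c ^ 2 / 2) * (1 - Real.exp (2 * t / c ^ 2)) *
          (-(1 / c ^ 2) * (inner ℝ (v t) (-(1 / c ^ 2) • v t + (1 / c) • g (x t)) +
              inner ℝ (-(1 / c ^ 2) • v t + (1 / c) • g (x t)) (v t)) +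
            (2 / c) * (inner ℝ (g (x t)) (-(1 / c ^ 2) • v t + (1 / c) • g (x t)) +
              inner ℝ ((1 / c : ℝ) • (fderiv ℝ g (x t)) (v t)) (v t))))) t := by
    exact (key t).add (((hexp.const_mul (c ^ 2 / 2)).mul hh1))
  have hWd : deriv (fun s => (‖v s‖ ^ 2 / 2 + V (x s)) +
      (c ^ 2 / 2) * (1 - Real.exp (2 * s / c ^ 2)) *
        deriv (fun r => ‖v r‖ ^ 2 / 2 + V (x r)) s) t =
      (1 - Real.exp (2 * t / c ^ 2)) *
        ((inner ℝ ((fderiv ℝ g (x t)) (v t)) (v t) : ℝ) + ‖g (x t)‖ ^ 2) := by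
    rw [show (fun s => (‖v s‖ ^ 2 / 2 + V (x s)) +
        (c ^ 2 / 2) * (1 - Real.exp (2 * s / c ^ 2)) *
          deriv (fun r => ‖v r‖ ^ 2 / 2 + V (x r)) s) =
      (fun s => (‖v s‖ ^ 2 / 2 + V (x s)) +
        (c ^ 2 / 2) * (1 - Real.exp (2 * s / c ^ 2)) *
          (-(1 / c ^ 2) * inner ℝ (v s) (v s) + (2 / c) * inner ℝ (g (x s)) (v s))) by
        funext s; rw [congrFun hderiv1 s]]
    rw [hW.deriv]
    simp only [inner_add_left, inner_add_right, real_inner_smul_left, real_inner_smul_right,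
      real_inner_comm (g (x t)) (v t), ← real_inner_self_eq_norm_sq]
    field_simp
    ring
  refine ⟨hWd, ?_⟩
  rw [hWd]
  have h1 : Real.exp (2 * t / c ^ 2) ≥ 1 := by
    apply Real.one_le_exp; positivity
  have h2 : (0 : ℝ) ≤ (inner ℝ ((fderiv ℝ g (x t)) (v t)) (v t) : ℝ) + ‖g (x t)‖ ^ 2 := by
    have := hconv (x t) (v t)
    nlinarith [sq_nonneg ‖g (x t)‖]
  nlinarith
end

section
/- Let m ∈ ℕ, c > 0, and let u : [0,T) → (0,∞) solve c²u'' + u' = -1/(2u). Set α(t) = u'(t)/u(t), let β solve c²β'(t) = -β(t) - m log u(t) - (m/2)log(4π) + 1, and define φ(x,t) = (α(t)/2)‖x‖² + β(t) and ρ(x,t) = (4πu(t)²)^{-m/2} exp(-‖x‖²/(4u(t)²)) on ℝ^m. Then (ρ,φ) satisfies ∂_t ρ + div(ρ∇φ) = 0 and c²(∂_t φ + (1/2)|∇φ|²) = -φ + log ρ + 1. -/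
open Real

/-- Euclidean divergence of a vector field on `ℝ^m`. -/
noncomputable def diverg {m : ℕ} (F : EuclideanSpace ℝ (Fin m) → EuclideanSpace ℝ (Fin m))
    (x : EuclideanSpace ℝ (Fin m)) : ℝ :=
  ∑ i, fderiv ℝ (fun y => F y i) x (EuclideanSpace.single i 1)

lemma hasGradientAt_quad {m : ℕ} (a b : ℝ) (y : EuclideanSpace ℝ (Fin m)) :
    HasGradientAt (fun z : EuclideanSpace ℝ (Fin m) => a / 2 * ‖z‖ ^ 2 + b) (a • y) y := by
  rw [hasGradientAt_iff_hasFDerivAt]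
  have h := ((hasFDerivAt_id y).norm_sq.const_mul (a/2)).add_const b
  have e : (InnerProductSpace.toDual ℝ (EuclideanSpace ℝ (Fin m))) (a • y)
      = (a/2) • (2 • (innerSL ℝ y).comp (ContinuousLinearMap.id ℝ _)) := by
    ext z
    simp [real_inner_smul_left]
    ring
  rw [e]; exact h

set_option maxHeartbeats 1000000 in
lemma diverg_gauss {m : ℕ} (A C a : ℝ) (hC : C ≠ 0) (x : EuclideanSpace ℝ (Fin m)) :
    diverg (fun y => ((A * Real.exp (-‖y‖^2 / C)) * a) • y) x
      = A * Real.exp (-‖x‖^2 / C) * a * (m - 2 * ‖x‖^2 / C) := by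
  have hnsq : HasFDerivAt (fun y : EuclideanSpace ℝ (Fin m) => ‖y‖^2) (2 • innerSL ℝ x) x := by
    simpa using (hasFDerivAt_id x).norm_sq
  have hfun : (fun y : EuclideanSpace ℝ (Fin m) => -‖y‖^2 / C)
      = fun y => -C⁻¹ * ‖y‖^2 := by funext y; field_simp
  have hq : HasFDerivAt (fun y : EuclideanSpace ℝ (Fin m) => -‖y‖^2 / C)
      ((-C⁻¹) • (2 • innerSL ℝ x)) x := by
    rw [hfun]; exact hnsq.const_mul _
  have hg := (hq.exp.const_mul A).mul_const a
  have key : ∀ i : Fin m,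
      fderiv ℝ (fun y : EuclideanSpace ℝ (Fin m) => ((A * Real.exp (-‖y‖^2 / C)) * a) * y i) x
        (EuclideanSpace.single i 1)
      = (A * Real.exp (-‖x‖^2 / C)) * a + x i * (a * (A * (Real.exp (-‖x‖^2 / C) * (-C⁻¹ * (2 * x i))))) := by
    intro i
    have hd : HasFDerivAt (fun y : EuclideanSpace ℝ (Fin m) => y i)
        (EuclideanSpace.proj i : EuclideanSpace ℝ (Fin m) →L[ℝ] ℝ) x :=
      (EuclideanSpace.proj i : EuclideanSpace ℝ (Fin m) →L[ℝ] ℝ).hasFDerivAt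
    rw [HasFDerivAt.fderiv (f := fun y : EuclideanSpace ℝ (Fin m) => ((A * Real.exp (-‖y‖^2 / C)) * a) * y i) (hg.mul hd)]
    simp [EuclideanSpace.single_apply, real_inner_comm x, EuclideanSpace.inner_single_left, EuclideanSpace.inner_single_right]
  have hsum : ∑ i : Fin m, (x i)^2 = ‖x‖^2 := by
    rw [EuclideanSpace.norm_eq, Real.sq_sqrt (by positivity)]
    simp [sq_abs]
  rw [diverg]
  have h3 : ∀ i : Fin m, (fun y : EuclideanSpace ℝ (Fin m) => (((A * Real.exp (-‖y‖^2 / C)) * a) • y) i)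
      = fun y => ((A * Real.exp (-‖y‖^2 / C)) * a) * y i := by
    intro i; funext y; simp [PiLp.smul_apply, smul_eq_mul]
  simp only [h3, key]
  rw [Finset.sum_add_distrib, Finset.sum_const, Finset.card_univ, Fintype.card_fin]
  have h4 : ∑ i : Fin m, x i * (a * (A * (Real.exp (-‖x‖^2 / C) * (-C⁻¹ * (2 * x i)))))
      = (a * A * Real.exp (-‖x‖^2 / C) * (-C⁻¹) * 2) * ∑ i : Fin m, (x i)^2 := by
    rw [Finset.mul_sum]; congr 1; funext i; ring
  rw [h4, hsum]
  field_simp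
  ring

set_option maxHeartbeats 1000000 in
/-- The Gaussian reference model for the Langevin deformation: with `c²u'' + u' = -1/(2u)`,
`α = u'/u`, `c²β' = -β - m log u - (m/2)log(4π) + 1`,
`φ(x,t) = (α(t)/2)‖x‖² + β(t)` and `ρ(x,t) = (4πu(t)²)^{-m/2} e^{-‖x‖²/(4u(t)²)}`,
the pair `(ρ,φ)` solves the transport equation `∂_t ρ + div(ρ∇φ) = 0` and the deformed
Hamilton–Jacobi equation `c²(∂_t φ + |∇φ|²/2) = -φ + log ρ + 1` on `ℝ^m`. -/
theorem gaussian_model_langevin (m : ℕ) (hm : 0 < m) (c T : ℝ) (hc : 0 < c) (hT : 0 < T)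
    (u u' u'' β β' : ℝ → ℝ)
    (hu : ∀ t ∈ Set.Ico (0 : ℝ) T, HasDerivAt u (u' t) t)
    (hu' : ∀ t ∈ Set.Ico (0 : ℝ) T, HasDerivAt u' (u'' t) t)
    (hupos : ∀ t ∈ Set.Ico (0 : ℝ) T, 0 < u t)
    (hode : ∀ t ∈ Set.Ico (0 : ℝ) T, c ^ 2 * u'' t + u' t = -1 / (2 * u t))
    (hβ : ∀ t ∈ Set.Ico (0 : ℝ) T, HasDerivAt β (β' t) t)
    (hβode : ∀ t ∈ Set.Ico (0 : ℝ) T,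
      c ^ 2 * β' t = -β t - m * Real.log (u t) - (m / 2) * Real.log (4 * π) + 1)
    (ρ φ : EuclideanSpace ℝ (Fin m) → ℝ → ℝ)
    (hρ : ∀ x t, ρ x t =
      (4 * π * u t ^ 2) ^ (-(m : ℝ) / 2) * Real.exp (-‖x‖ ^ 2 / (4 * u t ^ 2)))
    (hφ : ∀ x t, φ x t = (u' t / u t) / 2 * ‖x‖ ^ 2 + β t) :
    ∀ (x : EuclideanSpace ℝ (Fin m)), ∀ t ∈ Set.Ico (0 : ℝ) T,
      (deriv (fun s => ρ x s) t +
          diverg (fun y => ρ y t • gradient (fun z => φ z t) y) x = 0) ∧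
      (c ^ 2 * (deriv (fun s => φ x s) t + ‖gradient (fun z => φ z t) x‖ ^ 2 / 2) =
        -φ x t + Real.log (ρ x t) + 1) := by
  intro x t ht
  have hU : 0 < u t := hupos t ht
  have hUne : u t ≠ 0 := hU.ne'
  set A : ℝ := (4 * π * u t ^ 2) ^ (-(m : ℝ) / 2) with hA
  set E : ℝ := Real.exp (-‖x‖ ^ 2 / (4 * u t ^ 2)) with hE
  have hApos : 0 < A := Real.rpow_pos_of_pos (by positivity) _
  have hEpos : 0 < E := Real.exp_pos _
  have hgradfun : (fun z : EuclideanSpace ℝ (Fin m) => φ z t)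
      = fun z => (u' t / u t) / 2 * ‖z‖ ^ 2 + β t := by
    funext z; rw [hφ]
  have hgrad : ∀ y : EuclideanSpace ℝ (Fin m),
      gradient (fun z => φ z t) y = (u' t / u t) • y := by
    intro y; rw [hgradfun]; exact (hasGradientAt_quad (u' t / u t) (β t) y).gradient
  have hρfun : (fun s => ρ x s)
      = fun s => (4 * π * u s ^ 2) ^ (-(m : ℝ) / 2) * Real.exp (-‖x‖ ^ 2 / (4 * u s ^ 2)) := by
    funext s; rw [hρ]
  have hpos4 : (0:ℝ) < 4 * π * u t ^ 2 := by positivity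
  have h1 : HasDerivAt (fun s => 4 * π * u s ^ 2) (4 * π * (↑2 * u t ^ 1 * u' t)) t :=
    ((hu t ht).pow 2).const_mul (4 * π)
  have hAd := h1.rpow_const (p := -(m:ℝ)/2) (Or.inl hpos4.ne')
  have h2 : HasDerivAt (fun s => 4 * u s ^ 2) (4 * (↑2 * u t ^ 1 * u' t)) t :=
    ((hu t ht).pow 2).const_mul 4
  have hq := (hasDerivAt_const t (-‖x‖ ^ 2)).div h2 (by positivity)
  have hρt := hAd.mul hq.exp
  have hderivρ : deriv (fun s => ρ x s) t
      = (4 * π * (↑2 * u t ^ 1 * u' t) * (-(m:ℝ)/2) * (4 * π * u t ^ 2) ^ (-(m:ℝ)/2 - 1)) * E +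
        A * (E * ((0 * (4 * u t ^ 2) - (-‖x‖ ^ 2) * (4 * (↑2 * u t ^ 1 * u' t))) / (4 * u t ^ 2) ^ 2)) := by
    rw [hρfun]
    exact hρt.deriv
  have hrpow : (4 * π * u t ^ 2) ^ (-(m:ℝ)/2 - 1) = A / (4 * π * u t ^ 2) := by
    rw [hA, Real.rpow_sub hpos4, Real.rpow_one]
  have hFfun : (fun y => ρ y t • gradient (fun z => φ z t) y)
      = fun y : EuclideanSpace ℝ (Fin m) =>
        ((A * Real.exp (-‖y‖^2 / (4 * u t ^ 2))) * (u' t / u t)) • y := by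
    funext y
    rw [hρ, hgrad, smul_smul]
  have hdiv : diverg (fun y => ρ y t • gradient (fun z => φ z t) y) x
      = A * E * (u' t / u t) * (m - 2 * ‖x‖ ^ 2 / (4 * u t ^ 2)) := by
    rw [hFfun]
    exact diverg_gauss A (4 * u t ^ 2) (u' t / u t) (by positivity) x
  constructor
  · rw [hderivρ, hdiv, hrpow]
    field_simp
    ring
  · have hφfun : (fun s => φ x s) = fun s => (u' s / u s) / 2 * ‖x‖ ^ 2 + β s := by
      funext s; rw [hφ]
    have hdd := (((hu' t ht).div (hu t ht) hUne).div_const 2).mul_const (‖x‖ ^ 2) |>.add (hβ t ht)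
    have hderivφ : deriv (fun s => φ x s) t
        = (u'' t * u t - u' t * u' t) / u t ^ 2 / 2 * ‖x‖ ^ 2 + β' t := by
      rw [hφfun]; exact hdd.deriv
    have hgnorm : ‖gradient (fun z => φ z t) x‖ ^ 2 = (u' t / u t) ^ 2 * ‖x‖ ^ 2 := by
      rw [hgrad x, norm_smul, mul_pow, Real.norm_eq_abs, sq_abs]
    have hlogρ : Real.log (ρ x t)
        = (-(m:ℝ)/2) * (Real.log (4 * π) + 2 * Real.log (u t)) + (-‖x‖ ^ 2 / (4 * u t ^ 2)) := by
      rw [hρ, Real.log_mul hApos.ne' hEpos.ne', Real.log_exp, Real.log_rpow hpos4]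
      have h5 : Real.log (4 * π * u t ^ 2) = Real.log (4 * π) + 2 * Real.log (u t) := by
        rw [Real.log_mul (by positivity) (by positivity), Real.log_pow]
        push_cast; ring
      rw [h5]
    rw [hderivφ, hgnorm, hlogρ, hφ]
    have hcne : (c:ℝ) ^ 2 ≠ 0 := by positivity
    have hu''v : u'' t = (-1 / (2 * u t) - u' t) / c ^ 2 := by
      rw [eq_div_iff hcne]; linarith [hode t ht]
    have hβ'v : β' t = (-β t - m * Real.log (u t) - (m / 2) * Real.log (4 * π) + 1) / c ^ 2 := by
      rw [eq_div_iff hcne]; linarith [hβode t ht]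
    rw [hu''v, hβ'v]
    field_simp
    ring
end
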